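/- arXiv:1102.3682 — 2 statements merged into one kernel-verified Lean document; each statement's English description precedes it below -/
import Mathlib

section
/- For the nearest-neighbour model on ℤ^d in every dimension d ≥ 1 and every n ≥ 0, the number of lattice animals satisfies a_n(d) ≤ (2d)^n (n+1)^{n−1}/n!. -/
/-!
Label the `n` bonds of an animal by `1, …, n` (there are `n!` labellings) and the origin by `0`.
Orient each bond away from the origin, by graph distance inside the animal. The parent of bond `i`
is `0` if `i` starts at the origin, and otherwise a bond ending where `i` starts and starting
strictly closer to the origin. This makes `{0, …, n}` a tree rooted at `0`, and there are at most
`(n + 1) ^ (n - 1)` such trees, by injectivity of the Prüfer code. Going down the tree from the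
root, the tree and the direction of each bond (one of `2d`) recover the animal with its labelling,
so `a_n · n! ≤ (n + 1) ^ (n - 1) · (2d) ^ n`.
-/

open Filter

/-- Vertices of the `d`-dimensional integer lattice `ℤ^d`. -/
abbrev Vtx (d : ℕ) := Fin d → ℤ

/-- The nearest-neighbour graph on `ℤ^d`: `x ~ y` iff `‖x - y‖₁ = 1`. -/
def nnGraph (d : ℕ) : SimpleGraph (Vtx d) where
  Adj x y := (∑ i, |x i - y i|) = 1
  symm := by
    constructor
    intro x y h
    have e : ∀ i, |y i - x i| = |x i - y i| := fun i => abs_sub_comm _ _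
    simpa only [e] using h
  loopless := by constructor; intro x h; simp at h

/-- The spread-out graph on `ℤ^d`: `x ~ y` iff `0 < ‖x - y‖_∞ ≤ L`. -/
def spreadGraph (d L : ℕ) : SimpleGraph (Vtx d) where
  Adj x y := x ≠ y ∧ ∀ i, |x i - y i| ≤ (L : ℤ)
  symm := by
    constructor
    rintro x y ⟨h1, h2⟩
    exact ⟨h1.symm, fun i => by rw [abs_sub_comm]; exact h2 i⟩
  loopless := by constructor; rintro x ⟨h, -⟩; exact h rfl

/-- The graph on `ℤ^d` determined by a finite set of bonds. -/
def bondGraph (d : ℕ) (E : Finset (Sym2 (Vtx d))) : SimpleGraph (Vtx d) :=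
  SimpleGraph.fromEdgeSet (E : Set (Sym2 (Vtx d)))

/-- `E` is the bond set of a lattice animal (finite connected subgraph of `G`)
whose vertex set contains the origin.  (When `E = ∅`, the animal is the single
vertex at the origin.) -/
def IsLatticeAnimal (d : ℕ) (G : SimpleGraph (Vtx d)) (E : Finset (Sym2 (Vtx d))) : Prop :=
  (E : Set (Sym2 (Vtx d))) ⊆ G.edgeSet ∧
  (bondGraph d E).support.Pairwise (bondGraph d E).Reachable ∧
  (E.Nonempty → (0 : Vtx d) ∈ (bondGraph d E).support)

/-- `E` is the bond set of a lattice tree (finite connected subgraph of `G` containing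
no cycles) whose vertex set contains the origin. -/
def IsLatticeTree (d : ℕ) (G : SimpleGraph (Vtx d)) (E : Finset (Sym2 (Vtx d))) : Prop :=
  IsLatticeAnimal d G E ∧ (bondGraph d E).IsAcyclic

/-- `a_n`: the number of `n`-bond lattice animals in `G` containing the origin. -/
noncomputable def animalCount (d : ℕ) (G : SimpleGraph (Vtx d)) (n : ℕ) : ℕ :=
  Set.ncard {E : Finset (Sym2 (Vtx d)) | E.card = n ∧ IsLatticeAnimal d G E}

/-- `t_n`: the number of `n`-bond lattice trees in `G` containing the origin. -/
noncomputable def treeCount (d : ℕ) (G : SimpleGraph (Vtx d)) (n : ℕ) : ℕ :=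
  Set.ncard {E : Finset (Sym2 (Vtx d)) | E.card = n ∧ IsLatticeTree d G E}

open Finset

lemma Finset.eq_pair_of_card_eq_two {α : Type*} [DecidableEq α] {s : Finset α} {a b : α}
    (ha : a ∈ s) (hb : b ∈ s) (hab : a ≠ b) (hcard : s.card = 2) : s = {a, b} :=
  (eq_of_subset_of_card_le (by simp [insert_subset_iff, ha, hb]) (by simp [hcard, hab])).symm

lemma SimpleGraph.Reachable.exists_adj_dist_lt {V : Type*} {H : SimpleGraph V} {u v : V}
    (h : H.Reachable u v) (hne : u ≠ v) : ∃ w, H.Adj w v ∧ H.dist u w < H.dist u v := by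
  obtain ⟨p, hp⟩ := h.exists_walk_length_eq_dist
  have hnil : ¬ p.Nil := fun hnil => hne hnil.eq
  refine ⟨p.penultimate, p.adj_penultimate hnil, ?_⟩
  have hle := SimpleGraph.dist_le p.dropLast
  have hlen := p.length_dropLast_add_one hnil
  omega

lemma Set.nonempty_embedding_fin_of_encard_le {β : Type*} {s : Set β} {Δ : ℕ}
    (h : s.encard ≤ Δ) : Nonempty (s ↪ Fin Δ) := by
  obtain ⟨hfin, hcard⟩ := Set.encard_le_coe_iff_finite_ncard_le.1 h
  have := hfin.fintype
  refine Function.Embedding.nonempty_of_card_le ?_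
  rwa [Fintype.card_fin, ← Nat.card_eq_fintype_card, Nat.card_coe_set_eq]

lemma card_mul_factorial_le_of_injective {β T : Type*} [DecidableEq β] [Finite T]
    {P : Finset β → Prop} {n : ℕ} (f : {ε : Fin n → β // P (univ.image ε)} → T)
    (hf : Function.Injective f) :
    Nat.card {s : Finset β // s.card = n ∧ P s} * n.factorial ≤ Nat.card T := by
  let enum (x : {s : Finset β // s.card = n ∧ P s} × Equiv.Perm (Fin n)) : Fin n → β :=
    fun i => (equivFinOfCardEq x.1.2.1).symm (x.2 i)
  have image_enum x : univ.image (enum x) = x.1.1 := by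
    rw [show enum x = Subtype.val ∘ (x.2.trans (equivFinOfCardEq x.1.2.1).symm) from rfl,
      ← image_image, image_univ_of_surjective (Equiv.surjective _), univ_eq_attach,
      attach_image_val]
  have hinj : Function.Injective fun x => f ⟨enum x, (image_enum x).symm ▸ x.1.2.2⟩ := by
    rintro ⟨⟨s, hs⟩, σ⟩ ⟨⟨s', hs'⟩, σ'⟩ h
    have henum := congrArg Subtype.val (hf h)
    obtain rfl : s = s' := by
      simpa only [image_enum] using congrArg (univ.image ·) henum
    refine Prod.ext rfl (Equiv.ext fun i => (equivFinOfCardEq hs.1).symm.injective ?_)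
    exact Subtype.ext (congrFun henum i)
  calc Nat.card {s : Finset β // s.card = n ∧ P s} * n.factorial
      = Nat.card ({s : Finset β // s.card = n ∧ P s} × Equiv.Perm (Fin n)) := by
        rw [Nat.card_prod, Nat.card_perm, Nat.card_fin]
    _ ≤ Nat.card T := Nat.card_le_card_of_injective _ hinj

section RootedTree

variable {α : Type*}

/-- Parent maps of trees rooted at `r`; the height `h` certifies that iterating `p` from any
vertex reaches `r`. -/
def IsRootedTree (r : α) (p : α → α) : Prop :=
  p r = r ∧ ∃ h : α → ℕ, ∀ v, v ≠ r → h (p v) < h v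

lemma IsRootedTree.apply_ne_self {r v : α} {p : α → α} (hp : IsRootedTree r p) (hv : v ≠ r) :
    p v ≠ v := by
  obtain ⟨h, hh⟩ := hp.2
  exact fun hpv => (hh v hv).ne (congrArg h hpv)

def IsSubtree (r : α) (p : α → α) (S : Finset α) : Prop :=
  r ∈ S ∧ ∀ v ∈ S, p v ∈ S

variable [LinearOrder α] {r v : α} {p q : α → α} {S : Finset α} {k : ℕ}

def leaves (r : α) (p : α → α) (S : Finset α) : Finset α :=
  S.filter fun v => v ≠ r ∧ ∀ w ∈ S, p w ≠ v

lemma mem_leaves : v ∈ leaves r p S ↔ v ∈ S ∧ v ≠ r ∧ ∀ w ∈ S, p w ≠ v :=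
  mem_filter

def maxLeaf (r : α) (p : α → α) (S : Finset α) : α :=
  (leaves r p S).max.unbotD r

def pruferCode (r : α) (p : α → α) : ℕ → Finset α → List α
  | 0, _ => []
  | k + 1, S => p (maxLeaf r p S) :: pruferCode r p k (S.erase (maxLeaf r p S))

lemma length_pruferCode : ∀ k S, (pruferCode r p k S).length = k
  | 0, _ => rfl
  | k + 1, S => by rw [pruferCode, List.length_cons, length_pruferCode k]

lemma le_maxLeaf (hv : v ∈ leaves r p S) : v ≤ maxLeaf r p S := by
  obtain ⟨a, ha⟩ := Finset.max_of_nonempty ⟨v, hv⟩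
  rw [maxLeaf, ha]
  exact Finset.le_max_of_eq hv ha

lemma IsRootedTree.leaves_nonempty (hp : IsRootedTree r p) (hv : v ∈ S) (hvr : v ≠ r) :
    (leaves r p S).Nonempty := by
  obtain ⟨h, hh⟩ := hp.2
  obtain ⟨u, hu, hmax⟩ := (S.filter (· ≠ r)).exists_max_image h ⟨v, mem_filter.2 ⟨hv, hvr⟩⟩
  rw [mem_filter] at hu
  refine ⟨u, mem_leaves.2 ⟨hu.1, hu.2, fun w hw hwu => ?_⟩⟩
  have hwr : w ≠ r := fun hwr => hu.2 (by rw [← hwu, hwr, hp.1])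
  have hle := hmax w (mem_filter.2 ⟨hw, hwr⟩)
  have hlt := hh w hwr
  rw [hwu] at hlt
  omega

lemma IsRootedTree.maxLeaf_mem_leaves (hp : IsRootedTree r p)
    (hcard : 2 ≤ S.card) : maxLeaf r p S ∈ leaves r p S := by
  obtain ⟨v, hv, hvr⟩ := S.exists_mem_ne (by omega) r
  obtain ⟨a, ha⟩ := Finset.max_of_nonempty (hp.leaves_nonempty hv hvr)
  rw [maxLeaf, ha]
  exact Finset.mem_of_max ha

lemma IsRootedTree.card_erase_maxLeaf (hp : IsRootedTree r p) (hcard : S.card = k + 1 + 2) :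
    (S.erase (maxLeaf r p S)).card = k + 2 := by
  rw [card_erase_of_mem (mem_leaves.1 (hp.maxLeaf_mem_leaves (by omega : 2 ≤ S.card))).1, hcard]
  rfl

lemma IsSubtree.erase_leaf (hS : IsSubtree r p S) (hv : v ∈ leaves r p S) :
    IsSubtree r p (S.erase v) := by
  obtain ⟨-, hvr, hleaf⟩ := mem_leaves.1 hv
  refine ⟨mem_erase.2 ⟨hvr.symm, hS.1⟩, fun w hw => ?_⟩
  have hwS := mem_of_mem_erase hw
  exact mem_erase.2 ⟨hleaf w hwS, hS.2 w hwS⟩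

lemma IsRootedTree.apply_eq_root_of_card_eq_two (hp : IsRootedTree r p) (hS : IsSubtree r p S)
    (hcard : S.card = 2) (hv : v ∈ S) (hvr : v ≠ r) : p v = r := by
  have hpv := hS.2 v hv
  rw [eq_pair_of_card_eq_two hS.1 hv hvr.symm hcard, mem_insert, mem_singleton] at hpv
  exact hpv.resolve_right (hp.apply_ne_self hvr)

lemma mem_of_mem_pruferCode (hp : IsRootedTree r p) :
    ∀ {k S}, IsSubtree r p S → S.card = k + 2 → ∀ x ∈ pruferCode r p k S, x ∈ S
  | 0, _, _, _, x, hx => by simp [pruferCode] at hx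
  | k + 1, S, hS, hcard, x, hx => by
    have hL := hp.maxLeaf_mem_leaves (by omega : 2 ≤ S.card)
    rw [pruferCode, List.mem_cons] at hx
    rcases hx with rfl | hx
    · exact hS.2 _ (mem_leaves.1 hL).1
    · exact mem_of_mem_erase
        (mem_of_mem_pruferCode hp (hS.erase_leaf hL) (hp.card_erase_maxLeaf hcard) x hx)

lemma mem_leaves_iff_not_mem_pruferCode (hp : IsRootedTree r p) :
    ∀ {k S}, IsSubtree r p S → S.card = k + 2 → v ∈ S → v ≠ r →
      (v ∈ leaves r p S ↔ v ∉ pruferCode r p k S)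
  | 0, S, hS, hcard, hv, hvr => by
    simp only [pruferCode, List.not_mem_nil, not_false_eq_true, iff_true]
    refine mem_leaves.2 ⟨hv, hvr, fun w hw hwv => ?_⟩
    rw [eq_pair_of_card_eq_two hS.1 hv hvr.symm hcard, mem_insert, mem_singleton] at hw
    rcases hw with rfl | rfl
    · exact hvr (hwv.symm.trans hp.1)
    · exact hp.apply_ne_self hvr hwv
  | k + 1, S, hS, hcard, hv, hvr => by
    have hL := hp.maxLeaf_mem_leaves (by omega : 2 ≤ S.card)
    have hS' := hS.erase_leaf hL
    have hcard' := hp.card_erase_maxLeaf hcard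
    rw [pruferCode, List.mem_cons, not_or]
    by_cases hvL : v = maxLeaf r p S
    · subst hvL
      refine iff_of_true hL ⟨(hp.apply_ne_self hvr).symm, fun hmem => ?_⟩
      exact (mem_erase.1 (mem_of_mem_pruferCode hp hS' hcard' _ hmem)).1 rfl
    · rw [← mem_leaves_iff_not_mem_pruferCode hp hS' hcard' (mem_erase.2 ⟨hvL, hv⟩) hvr,
        mem_leaves, mem_leaves]
      constructor
      · rintro ⟨-, -, hleaf⟩
        exact ⟨fun h => hleaf _ (mem_leaves.1 hL).1 h.symm,
          mem_erase.2 ⟨hvL, hv⟩, hvr, fun w hw => hleaf w (mem_of_mem_erase hw)⟩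
      · rintro ⟨hpL, -, -, hleaf⟩
        refine ⟨hv, hvr, fun w hw => ?_⟩
        by_cases hwL : w = maxLeaf r p S
        · exact hwL ▸ Ne.symm hpL
        · exact hleaf w (mem_erase.2 ⟨hwL, hw⟩)

lemma apply_eq_apply_of_pruferCode_eq (hp : IsRootedTree r p) (hq : IsRootedTree r q) :
    ∀ {k S}, IsSubtree r p S → IsSubtree r q S → S.card = k + 2 →
      pruferCode r p k S = pruferCode r q k S → ∀ v ∈ S, p v = q v
  | 0, S, hSp, hSq, hcard, _, v, hv => by
    by_cases hvr : v = r
    · rw [hvr, hp.1, hq.1]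
    · rw [hp.apply_eq_root_of_card_eq_two hSp hcard hv hvr, hq.apply_eq_root_of_card_eq_two hSq hcard hv hvr]
  | k + 1, S, hSp, hSq, hcard, hcode, v, hv => by
    have hLp := hp.maxLeaf_mem_leaves (by omega : 2 ≤ S.card)
    have hLq := hq.maxLeaf_mem_leaves (by omega : 2 ≤ S.card)
    have same_leaves : ∀ u ∈ S, u ≠ r → (u ∈ leaves r p S ↔ u ∈ leaves r q S) :=
      fun u hu hur => by
        rw [mem_leaves_iff_not_mem_pruferCode hp hSp hcard hu hur,
          mem_leaves_iff_not_mem_pruferCode hq hSq hcard hu hur, hcode]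
    have hL : maxLeaf r p S = maxLeaf r q S := le_antisymm
      (le_maxLeaf ((same_leaves _ (mem_leaves.1 hLp).1 (mem_leaves.1 hLp).2.1).1 hLp))
      (le_maxLeaf ((same_leaves _ (mem_leaves.1 hLq).1 (mem_leaves.1 hLq).2.1).2 hLq))
    rw [pruferCode, pruferCode, ← hL, List.cons.injEq] at hcode
    by_cases hvL : v = maxLeaf r p S
    · exact hvL ▸ hcode.1
    · exact apply_eq_apply_of_pruferCode_eq hp hq (hSp.erase_leaf hLp) (hL ▸ hSq.erase_leaf hLq)
        (hp.card_erase_maxLeaf hcard) hcode.2 v (mem_erase.2 ⟨hvL, hv⟩)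

theorem card_isRootedTree_le {α : Type*} [Fintype α] (r : α) :
    Nat.card {p : α → α // IsRootedTree r p} ≤ Fintype.card α ^ (Fintype.card α - 2) := by
  let _ : LinearOrder α := LinearOrder.lift' _ (Fintype.equivFin α).injective
  obtain hα | ⟨k, hk⟩ : Fintype.card α = 1 ∨ ∃ k, Fintype.card α = k + 2 := by
    have hpos := Fintype.card_pos_iff.2 ⟨r⟩
    rcases Nat.lt_or_ge (Fintype.card α) 2 with h | h
    · exact Or.inl (by omega)
    · exact Or.inr ⟨_, (Nat.sub_add_cancel h).symm⟩
  · have : Subsingleton α := Fintype.card_le_one_iff_subsingleton.1 hα.le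
    rw [hα, one_pow]
    exact Finite.card_le_one_iff_subsingleton.2 inferInstance
  · have hsub (p : α → α) : IsSubtree r p univ := ⟨mem_univ r, fun v _ => mem_univ (p v)⟩
    have hinj : Function.Injective fun p : {p : α → α // IsRootedTree r p} =>
        (⟨pruferCode r p.1 k univ, length_pruferCode k univ⟩ : List.Vector α k) :=
      fun p q hpq => Subtype.ext <| funext fun v =>
        apply_eq_apply_of_pruferCode_eq p.2 q.2 (hsub _) (hsub _) (by rw [card_univ, hk])
          (congrArg Subtype.val hpq) v (mem_univ v)
    calc Nat.card {p : α → α // IsRootedTree r p}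
        ≤ Nat.card (List.Vector α k) := Nat.card_le_card_of_injective _ hinj
      _ = Fintype.card α ^ (Fintype.card α - 2) := by
        rw [Nat.card_eq_fintype_card, card_vector, hk, Nat.add_sub_cancel]

end RootedTree

section Animal

variable {d : ℕ} {G : SimpleGraph (Vtx d)} {E : Finset (Sym2 (Vtx d))} {e : Sym2 (Vtx d)}

noncomputable def rootDist (E : Finset (Sym2 (Vtx d))) (v : Vtx d) : ℕ :=
  (bondGraph d E).dist 0 v

lemma exists_orientation (E : Finset (Sym2 (Vtx d))) (e : Sym2 (Vtx d)) :
    ∃ z : Vtx d × Vtx d, e = s(z.1, z.2) ∧ rootDist E z.1 ≤ rootDist E z.2 := by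
  induction e using Sym2.ind with
  | _ x y =>
    rcases le_total (rootDist E x) (rootDist E y) with h | h
    · exact ⟨(x, y), rfl, h⟩
    · exact ⟨(y, x), Sym2.eq_swap, h⟩

noncomputable def nearEnd (E : Finset (Sym2 (Vtx d))) (e : Sym2 (Vtx d)) : Vtx d :=
  (exists_orientation E e).choose.1

noncomputable def farEnd (E : Finset (Sym2 (Vtx d))) (e : Sym2 (Vtx d)) : Vtx d :=
  (exists_orientation E e).choose.2

lemma eq_mk_nearEnd_farEnd : e = s(nearEnd E e, farEnd E e) :=
  (exists_orientation E e).choose_spec.1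

lemma rootDist_nearEnd_le : rootDist E (nearEnd E e) ≤ rootDist E (farEnd E e) :=
  (exists_orientation E e).choose_spec.2

lemma nearEnd_farEnd_mk_of_lt {u v : Vtx d} (h : rootDist E u < rootDist E v) :
    nearEnd E s(u, v) = u ∧ farEnd E s(u, v) = v := by
  have hle := rootDist_nearEnd_le (E := E) (e := s(u, v))
  rcases Sym2.eq_iff.1 (eq_mk_nearEnd_farEnd (E := E) (e := s(u, v))) with ⟨hu, hv⟩ | ⟨hu, hv⟩
  · exact ⟨hu.symm, hv.symm⟩
  · rw [← hu, ← hv] at hle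
    omega

lemma IsLatticeAnimal.adj_nearEnd_farEnd (hE : IsLatticeAnimal d G E) (he : e ∈ E) :
    G.Adj (nearEnd E e) (farEnd E e) := by
  rw [← SimpleGraph.mem_edgeSet, ← eq_mk_nearEnd_farEnd]
  exact hE.1 he

def IsParentEdge (E : Finset (Sym2 (Vtx d))) (f e : Sym2 (Vtx d)) : Prop :=
  farEnd E f = nearEnd E e ∧ rootDist E (nearEnd E f) < rootDist E (nearEnd E e)

lemma IsLatticeAnimal.exists_isParentEdge (hE : IsLatticeAnimal d G E) (he : e ∈ E)
    (h0 : nearEnd E e ≠ 0) : ∃ f ∈ E, IsParentEdge E f e := by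
  have hadj : (bondGraph d E).Adj (nearEnd E e) (farEnd E e) := by
    rw [bondGraph, SimpleGraph.fromEdgeSet_adj, ← eq_mk_nearEnd_farEnd]
    exact ⟨he, (hE.adj_nearEnd_farEnd he).ne⟩
  have hreach : (bondGraph d E).Reachable 0 (nearEnd E e) :=
    hE.2.1 (hE.2.2 ⟨e, he⟩) ⟨_, hadj⟩ (Ne.symm h0)
  obtain ⟨w, hw, hlt⟩ := hreach.exists_adj_dist_lt (Ne.symm h0)
  rw [bondGraph, SimpleGraph.fromEdgeSet_adj] at hw
  obtain ⟨hnear, hfar⟩ := nearEnd_farEnd_mk_of_lt (E := E) hlt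
  exact ⟨s(w, nearEnd E e), hw.1, hfar, by rw [hnear]; exact hlt⟩

variable {n : ℕ} {ε ε' : Fin n → Sym2 (Vtx d)}

open Classical in
/-- Vertex `i.succ` stands for the bond `ε i`, vertex `0` for the origin. -/
noncomputable def labelParent (ε : Fin n → Sym2 (Vtx d)) : Fin (n + 1) → Fin (n + 1) :=
  Fin.cases 0 fun i =>
    if h : ∃ j, IsParentEdge (univ.image ε) (ε j) (ε i) then h.choose.succ else 0

lemma isParentEdge_of_labelParent_eq_succ {i j : Fin n} (h : labelParent ε i.succ = j.succ) :
    IsParentEdge (univ.image ε) (ε j) (ε i) := by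
  rw [labelParent, Fin.cases_succ] at h
  split_ifs at h with hex
  · exact Fin.succ_injective _ h ▸ hex.choose_spec
  · exact absurd h.symm (Fin.succ_ne_zero j)

lemma nearEnd_eq_zero_of_labelParent_eq_zero (hε : IsLatticeAnimal d G (univ.image ε))
    {i : Fin n} (h : labelParent ε i.succ = 0) : nearEnd (univ.image ε) (ε i) = 0 := by
  by_contra h0
  obtain ⟨f, hf, hpar⟩ := hε.exists_isParentEdge (mem_image_of_mem ε (mem_univ i)) h0
  obtain ⟨j, -, rfl⟩ := mem_image.1 hf
  rw [labelParent, Fin.cases_succ, dif_pos ⟨j, hpar⟩] at h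
  exact Fin.succ_ne_zero _ h

lemma isRootedTree_labelParent (ε : Fin n → Sym2 (Vtx d)) : IsRootedTree 0 (labelParent ε) := by
  refine ⟨rfl, Fin.cases 0 fun i => rootDist (univ.image ε) (nearEnd (univ.image ε) (ε i)) + 1,
    fun v hv => ?_⟩
  obtain ⟨i, rfl⟩ := Fin.exists_succ_eq.2 hv
  cases hpi : labelParent ε i.succ using Fin.cases with
  | zero => simp
  | succ j => simpa using (isParentEdge_of_labelParent_eq_succ hpi).2

lemma eq_of_labelParent_eq (hε : IsLatticeAnimal d G (univ.image ε))
    (hε' : IsLatticeAnimal d G (univ.image ε')) (hp : labelParent ε = labelParent ε')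
    (hfar : ∀ i, nearEnd (univ.image ε) (ε i) = nearEnd (univ.image ε') (ε' i) →
      farEnd (univ.image ε) (ε i) = farEnd (univ.image ε') (ε' i)) :
    ε = ε' := by
  suffices hnear : ∀ k i, rootDist (univ.image ε) (nearEnd (univ.image ε) (ε i)) = k →
      nearEnd (univ.image ε) (ε i) = nearEnd (univ.image ε') (ε' i) by
    funext i
    rw [eq_mk_nearEnd_farEnd (E := univ.image ε) (e := ε i),
      eq_mk_nearEnd_farEnd (E := univ.image ε') (e := ε' i), hnear _ i rfl, hfar i (hnear _ i rfl)]
  -- The near end of a bond is the origin or the far end of its parent, which is nearer.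
  intro k
  induction k using Nat.strong_induction_on with
  | _ k ih =>
    intro i hk
    cases hpi : labelParent ε i.succ using Fin.cases with
    | zero =>
      rw [nearEnd_eq_zero_of_labelParent_eq_zero hε hpi,
        nearEnd_eq_zero_of_labelParent_eq_zero hε' (hp ▸ hpi)]
    | succ j =>
      obtain ⟨hj, hlt⟩ := isParentEdge_of_labelParent_eq_succ hpi
      obtain ⟨hj', -⟩ := isParentEdge_of_labelParent_eq_succ (hp ▸ hpi)
      rw [← hj, ← hj', hfar j (ih _ (hk ▸ hlt) j rfl)]

theorem animalCount_mul_factorial_le {Δ : ℕ} (hG : ∀ x, (G.neighborSet x).encard ≤ Δ) (n : ℕ) :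
    animalCount d G n * n.factorial ≤ (n + 1) ^ (n - 1) * Δ ^ n := by
  have code x : G.neighborSet x ↪ Fin Δ := (Set.nonempty_embedding_fin_of_encard_le (hG x)).some
  have code_inj {a a' y y' : Vtx d} (hy : y ∈ G.neighborSet a) (hy' : y' ∈ G.neighborSet a')
      (ha : a = a') (h : code a ⟨y, hy⟩ = code a' ⟨y', hy'⟩) : y = y' := by
    subst ha
    exact congrArg Subtype.val ((code a).injective h)
  let encode (ε : {ε : Fin n → Sym2 (Vtx d) // IsLatticeAnimal d G (univ.image ε)}) :
      {p : Fin (n + 1) → Fin (n + 1) // IsRootedTree 0 p} × (Fin n → Fin Δ) :=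
    (⟨labelParent ε.1, isRootedTree_labelParent ε.1⟩,
      fun i => code _ ⟨_, ε.2.adj_nearEnd_farEnd (mem_image_of_mem _ (mem_univ i))⟩)
  have encode_injective : Function.Injective encode := by
    rintro ⟨ε, hε⟩ ⟨ε', hε'⟩ h
    obtain ⟨hp, hdir⟩ := Prod.ext_iff.1 h
    exact Subtype.ext (eq_of_labelParent_eq hε hε' (congrArg Subtype.val hp)
      fun i hi => code_inj _ _ hi (congrFun hdir i))
  calc animalCount d G n * n.factorial
      ≤ Nat.card ({p : Fin (n + 1) → Fin (n + 1) // IsRootedTree 0 p} × (Fin n → Fin Δ)) := by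
        rw [animalCount, ← Nat.card_coe_set_eq]
        exact card_mul_factorial_le_of_injective encode encode_injective
    _ ≤ (n + 1) ^ (n - 1) * Δ ^ n := by
        rw [Nat.card_prod, Nat.card_fun, Nat.card_fin, Nat.card_fin]
        gcongr
        simpa using card_isRootedTree_le (0 : Fin (n + 1))

lemma exists_eq_add_single_of_nnGraph_adj {x y : Vtx d} (h : (nnGraph d).Adj x y) :
    ∃ (i : Fin d) (u : ℤˣ), y = x + Pi.single i (u : ℤ) := by
  change ∑ i, |x i - y i| = 1 at h
  obtain ⟨i, hi⟩ : ∃ i, x i ≠ y i := by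
    by_contra! h0
    simp [h0] at h
  have hsplit := add_sum_erase univ (fun j => |x j - y j|) (mem_univ i)
  have hrest : ∑ j ∈ univ.erase i, |x j - y j| = 0 := by
    have hi1 := Int.one_le_abs (sub_ne_zero.2 hi)
    have hnonneg := sum_nonneg fun j (_ : j ∈ univ.erase i) => abs_nonneg (x j - y j)
    omega
  have hunit : |y i - x i| = 1 := by rw [abs_sub_comm]; omega
  refine ⟨i, (Int.isUnit_iff_abs_eq.2 hunit).unit, funext fun j => ?_⟩
  rcases eq_or_ne j i with rfl | hj
  · simp
  · have hxy := (sum_eq_zero_iff_of_nonneg fun j _ => abs_nonneg (x j - y j)).1 hrest j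
      (mem_erase.2 ⟨hj, mem_univ j⟩)
    rw [abs_eq_zero, sub_eq_zero] at hxy
    simp [Pi.single_eq_of_ne hj, hxy]

lemma encard_neighborSet_nnGraph_le (x : Vtx d) :
    ((nnGraph d).neighborSet x).encard ≤ (2 * d : ℕ) :=
  calc ((nnGraph d).neighborSet x).encard
      ≤ (Set.range fun c : Fin d × ℤˣ => x + Pi.single c.1 (c.2 : ℤ)).encard := by
        refine Set.encard_le_encard fun y hy => ?_
        obtain ⟨i, u, rfl⟩ := exists_eq_add_single_of_nnGraph_adj hy
        exact ⟨(i, u), rfl⟩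
    _ ≤ ENat.card (Fin d × ℤˣ) := by
        rw [← Set.image_univ, ← Set.encard_univ]
        exact Set.encard_image_le _ _
    _ = (2 * d : ℕ) := by
        rw [ENat.card_eq_coe_fintype_card, Fintype.card_prod, Fintype.card_fin, mul_comm]
        rfl

end Animal

theorem animal_count_upper_bound_nearest_neighbour_general (d : ℕ) (n : ℕ) :
    (animalCount d (nnGraph d) n : ℝ)
      ≤ (2 * d : ℝ) ^ n * ((n + 1 : ℝ) ^ (n - 1) / (n.factorial : ℝ)) := by
  have h := animalCount_mul_factorial_le (encard_neighborSet_nnGraph_le (d := d)) n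
  rw [mul_div_assoc', le_div_iff₀ (by positivity), mul_comm ((2 * d : ℝ) ^ n)]
  exact_mod_cast h

/-- For the nearest-neighbour model on `ℤ^d` in every dimension `d ≥ 1` and every
`n ≥ 0`, the number of lattice animals satisfies `a_n(d) ≤ (2d)^n (n+1)^{n-1}/n!`. -/
theorem animal_count_upper_bound_nearest_neighbour (d : ℕ) (hd : 1 ≤ d) (n : ℕ) :
    (animalCount d (nnGraph d) n : ℝ)
      ≤ (2 * d : ℝ) ^ n * ((n + 1 : ℝ) ^ (n - 1) / (n.factorial : ℝ)) :=
  animal_count_upper_bound_nearest_neighbour_general d n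
end

section
/- For every n ≥ 0, the sum over rooted plane trees T with exactly n edges of the product over vertices i of T of 1/ξ_i!, where ξ_i is the number of children of vertex i, equals (n+1)^{n−1}/n!. -/
open Filter

/-- Rooted plane trees: a node carrying an ordered (finite) list of subtrees. -/
inductive PlaneTree : Type where
  | node : List PlaneTree → PlaneTree

namespace PlaneTree

/-- The number of edges of a rooted plane tree. -/
def edges : PlaneTree → ℕ
  | node ts => ts.length + (ts.attach.map (fun t => edges t.1)).sum
decreasing_by
  have h1 := List.sizeOf_lt_of_mem t.2
  simp only [node.sizeOf_spec]
  omega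

/-- The weight `∏_{i ∈ T} 1/ξ_i!` of a rooted plane tree, where `ξ_i` is the number
of children (the forward degree) of the vertex `i`. -/
noncomputable def weight : PlaneTree → ℝ
  | node ts => ((ts.length).factorial : ℝ)⁻¹ * (ts.attach.map (fun t => weight t.1)).prod
decreasing_by
  have h1 := List.sizeOf_lt_of_mem t.2
  simp only [node.sizeOf_spec]
  omega

end PlaneTree

/-!
Cutting a tree at its root shows that `F = ∑_T weight T • X ^ edges T` satisfies `F = exp (X F)`,
an equation that determines a power series coefficient by coefficient. The Abel polynomials
`A_m(x) = x (x + m) ^ (m - 1)` are of binomial type, i.e. `E_x = ∑ A_m(x) X ^ m / m!` satisfies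
`E_(x + y) = E_x E_y`: both sides have the same value at `x = 0` and, since
`A_m' = m A_(m-1)(x + 1)`, the same derivative in `x`. Hence `E_1 ^ k = E_k`, and the binomial
theorem turns `E_1 = ∑_k X ^ k E_k / k!` into a coefficient identity, so `E_1 = exp (X E_1)`.
Therefore `F = E_1 = ∑ (n + 1) ^ (n - 1) X ^ n / n!`. The weights are summed in `ℝ≥0∞`, where
every sum over the infinitely many trees exists.
-/

open Finset
open scoped Nat NNReal ENNReal PowerSeries

namespace Polynomial

variable {R : Type*} [CommRing R]

noncomputable def abel : ℕ → R[X]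
  | 0 => 1
  | m + 1 => X * (X + (m + 1 : R[X])) ^ m

@[simp] theorem abel_zero : (abel 0 : R[X]) = 1 := rfl

theorem abel_succ (m : ℕ) : (abel (m + 1) : R[X]) = X * (X + (m + 1 : R[X])) ^ m := rfl

theorem abel_succ_eval_zero (m : ℕ) : (abel (m + 1) : R[X]).eval 0 = 0 := by
  simp [abel_succ]

theorem abel_eval_one (m : ℕ) : (abel m : R[X]).eval 1 = (m + 1 : R) ^ (m - 1) := by
  cases m with
  | zero => simp
  | succ m =>
    simp only [abel_succ, eval_mul, eval_X, eval_pow, eval_add, eval_natCast, eval_one, one_mul,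
      Nat.cast_add, Nat.cast_one, add_tsub_cancel_right]
    ring

theorem derivative_abel_succ (m : ℕ) :
    derivative (abel (m + 1) : R[X]) = (m + 1 : R[X]) * (abel m).comp (X + 1) := by
  cases m with
  | zero => simp [abel_succ]
  | succ m =>
    simp only [abel_succ, derivative_mul, derivative_X, derivative_pow, Nat.add_sub_cancel,
      derivative_natCast, derivative_one, mul_comp, X_comp, pow_comp, add_comp, natCast_comp,
      one_comp, map_add, map_natCast, map_one, Nat.cast_add, Nat.cast_one]
    ring

theorem eq_of_derivative_eq_of_eval_zero_eq [IsAddTorsionFree R] {p q : R[X]}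
    (hd : derivative p = derivative q) (h0 : p.eval 0 = q.eval 0) : p = q := by
  have h := eq_C_of_derivative_eq_zero (p := p - q) (by rw [derivative_sub, hd, sub_self])
  rwa [coeff_zero_eq_eval_zero, eval_sub, h0, sub_self, map_zero, sub_eq_zero] at h

theorem abel_comp_X_add_C [IsAddTorsionFree R] (m : ℕ) (y : R) :
    (abel m).comp (X + C y)
      = ∑ p ∈ antidiagonal m, (m.choose p.1 : R[X]) * abel p.1 * C ((abel p.2).eval y) := by
  induction m with
  | zero => simp
  | succ m ih =>
    -- Both sides have derivative `(m + 1) * (abel m).comp (X + C y + 1)`, and at `0` only the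
    -- term `p = (0, m + 1)` of the sum survives.
    apply eq_of_derivative_eq_of_eval_zero_eq
    · have hterm : ∀ p ∈ antidiagonal m,
          derivative (((m + 1).choose (p.1 + 1) : R[X]) * abel (p.1 + 1) * C ((abel p.2).eval y))
            = (m + 1 : R[X])
              * ((m.choose p.1 : R[X]) * abel p.1 * C ((abel p.2).eval y)).comp (X + 1) := by
        intro p _
        have hchoose :
            ((m : R[X]) + 1) * m.choose p.1 = (m + 1).choose (p.1 + 1) * ((p.1 : R[X]) + 1) := by
          simpa using congrArg (Nat.cast : ℕ → R[X]) (Nat.add_one_mul_choose_eq m p.1)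
        simp only [derivative_mul, derivative_natCast, derivative_C, derivative_abel_succ, mul_comp,
          natCast_comp, C_comp, zero_mul, mul_zero, zero_add, add_zero]
        linear_combination (-(abel p.1).comp (X + 1) * C ((abel p.2).eval y)) * hchoose
      rw [derivative_comp, derivative_abel_succ, derivative_sum, Nat.sum_antidiagonal_succ,
        sum_congr rfl hterm, ← mul_sum, ← sum_comp, ← ih]
      simp only [abel_zero, derivative_mul, derivative_natCast, derivative_C, derivative_add,
        derivative_X, mul_zero, zero_mul, zero_add, add_zero, one_mul, mul_one, mul_comp,
        natCast_comp, comp_assoc, add_comp, X_comp, C_comp, one_comp, add_right_comm X 1 (C y)]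
    · simp [Nat.sum_antidiagonal_succ, eval_finsetSum, abel_succ_eval_zero]

theorem abel_eval_add [IsAddTorsionFree R] (m : ℕ) (x y : R) :
    (abel m).eval (x + y)
      = ∑ p ∈ antidiagonal m, (m.choose p.1 : R) * (abel p.1).eval x * (abel p.2).eval y := by
  simpa [eval_finsetSum, eval_comp] using congrArg (eval x) (abel_comp_X_add_C m y)

theorem abel_eval_one_eq_sum (n : ℕ) :
    (abel n : R[X]).eval 1
      = ∑ p ∈ antidiagonal n, (n.choose p.1 : R) * (abel p.2).eval (p.1 : R) := by
  cases n with
  | zero => simp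
  | succ m =>
    have hterm : ∀ p ∈ antidiagonal m,
        ((m + 1).choose (p.1 + 1) : R) * (abel p.2).eval ((p.1 + 1 : ℕ) : R)
          = m.choose p.1 • (1 ^ p.1 * ((m : R) + 1) ^ p.2) := by
      rintro ⟨i, j⟩ hij
      rw [HasAntidiagonal.mem_antidiagonal] at hij
      subst hij
      cases j with
      | zero => simp
      | succ j =>
        have hchoose := congrArg (Nat.cast : ℕ → R) (Nat.add_one_mul_choose_eq (i + (j + 1)) i)
        push_cast at hchoose
        simp only [abel_succ, eval_mul, eval_X, eval_pow, eval_add, eval_natCast, eval_one,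
          nsmul_eq_mul, one_pow, one_mul]
        push_cast
        linear_combination (-((i : R) + j + 1 + 1) ^ j) * hchoose
    rw [Nat.sum_antidiagonal_succ, sum_congr rfl hterm, ← (Commute.all _ _).add_pow']
    simp [abel_succ]

end Polynomial

namespace PowerSeries

section Lagrange

variable {R S : Type*} [CommSemiring R] [CommSemiring S]

/-- `F = φ (X * F)` for `φ = ∑ c k X ^ k`, read off coefficientwise. -/
def SatisfiesLagrange (c : ℕ → R) (F : R⟦X⟧) : Prop :=
  ∀ n, coeff n F = ∑ p ∈ antidiagonal n, c p.1 * coeff p.2 (F ^ p.1)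

theorem coeff_pow_eq_of_coeff_eq {F G : R⟦X⟧} {m : ℕ} (h : ∀ j ≤ m, coeff j F = coeff j G)
    (k : ℕ) : coeff m (F ^ k) = coeff m (G ^ k) := by
  have htrunc : trunc (m + 1) F = trunc (m + 1) G := by
    ext j
    simp only [coeff_trunc]
    split_ifs with hj
    exacts [h j (Nat.lt_succ_iff.1 hj), rfl]
  have hcoeff (H : R⟦X⟧) :
      coeff m (H ^ k) = (trunc (m + 1) ((trunc (m + 1) H : R⟦X⟧) ^ k)).coeff m := by
    rw [trunc_trunc_pow, coeff_trunc, if_pos m.lt_succ_self]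
  rw [hcoeff F, hcoeff G, htrunc]

theorem SatisfiesLagrange.eq {c : ℕ → R} {F G : R⟦X⟧} (hF : SatisfiesLagrange c F)
    (hG : SatisfiesLagrange c G) : F = G := by
  ext n
  induction n using Nat.strong_induction_on with
  | _ n ih =>
    rw [hF n, hG n]
    refine sum_congr rfl fun p hp => ?_
    rw [HasAntidiagonal.mem_antidiagonal] at hp
    rcases p with ⟨_ | k, m⟩
    · simp only [pow_zero]
    · rw [coeff_pow_eq_of_coeff_eq fun j hj => ih j (by simp only at hp; omega)]

theorem satisfiesLagrange_map_iff (f : R →+* S) (hf : Function.Injective f) {c : ℕ → R}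
    {F : R⟦X⟧} : SatisfiesLagrange (f ∘ c) (map f F) ↔ SatisfiesLagrange c F := by
  refine forall_congr' fun n => ?_
  simp only [coeff_map, ← map_pow, Function.comp_apply, ← map_mul, ← map_sum, hf.eq_iff]

end Lagrange

section AbelEGF

variable {K : Type*} [Field K] [CharZero K]

noncomputable def abelEGF (x : K) : K⟦X⟧ :=
  mk fun m => (Polynomial.abel m).eval x / m !

theorem abelEGF_zero : abelEGF (0 : K) = 1 := by
  ext (_ | m) <;> simp [abelEGF, Polynomial.abel_succ_eval_zero]

theorem abelEGF_add (x y : K) : abelEGF (x + y) = abelEGF x * abelEGF y := by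
  ext m
  simp only [abelEGF, coeff_mul, coeff_mk, Polynomial.abel_eval_add, sum_div]
  refine sum_congr rfl fun p hp => ?_
  rw [HasAntidiagonal.mem_antidiagonal] at hp
  subst hp
  have hfact := (p.1 + p.2).factorial_ne_zero
  rw [Nat.cast_add_choose]
  field_simp

theorem abelEGF_natCast (k : ℕ) : abelEGF (k : K) = abelEGF 1 ^ k := by
  induction k with
  | zero => simp [abelEGF_zero]
  | succ k ih => rw [Nat.cast_succ, abelEGF_add, ih, pow_succ]

theorem satisfiesLagrange_abelEGF_one :
    SatisfiesLagrange (fun k => (k ! : K)⁻¹) (abelEGF 1) := by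
  intro n
  simp only [← abelEGF_natCast]
  simp only [abelEGF, coeff_mk, Polynomial.abel_eval_one_eq_sum, sum_div]
  refine sum_congr rfl fun p hp => ?_
  rw [HasAntidiagonal.mem_antidiagonal] at hp
  subst hp
  have hfact := (p.1 + p.2).factorial_ne_zero
  rw [Nat.cast_add_choose]
  field_simp

end AbelEGF

end PowerSeries

open PowerSeries

/-- Taken over `ℝ≥0` so that it maps by ring homomorphisms both to `ℝ`, where the Abel identities
live, and to `ℝ≥0∞`, where the trees are counted. -/
noncomputable def cayleySeries : ℝ≥0⟦X⟧ :=
  mk fun n => (n + 1 : ℝ≥0) ^ (n - 1) / n !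

theorem map_toRealHom_cayleySeries : map NNReal.toRealHom cayleySeries = abelEGF 1 := by
  ext n
  simp [cayleySeries, abelEGF, Polynomial.abel_eval_one]

theorem satisfiesLagrange_cayleySeries :
    SatisfiesLagrange (fun k => (k ! : ℝ≥0∞)⁻¹) (map ENNReal.ofNNRealHom cayleySeries) := by
  have hReal : (NNReal.toRealHom ∘ fun k => (k ! : ℝ≥0)⁻¹) = fun k => (k ! : ℝ)⁻¹ := by
    funext k
    simp
  have hENNReal : (ENNReal.ofNNRealHom ∘ fun k => (k ! : ℝ≥0)⁻¹) = fun k => (k ! : ℝ≥0∞)⁻¹ := by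
    funext k
    exact (ENNReal.coe_inv (Nat.cast_ne_zero.2 k.factorial_ne_zero)).trans
      (congrArg _ (ENNReal.coe_natCast _))
  rw [← hENNReal, satisfiesLagrange_map_iff _ ENNReal.coe_injective,
    ← satisfiesLagrange_map_iff NNReal.toRealHom NNReal.coe_injective, hReal,
    map_toRealHom_cayleySeries]
  exact satisfiesLagrange_abelEGF_one

section WeightedGF

variable {α β : Type*}

noncomputable def weightedGF (size : α → ℕ) (w : α → ℝ≥0∞) : ℝ≥0∞⟦X⟧ :=
  mk fun n => ∑' a, if size a = n then w a else 0

theorem coeff_weightedGF (size : α → ℕ) (w : α → ℝ≥0∞) (n : ℕ) :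
    coeff n (weightedGF size w) = ∑' a : {a // size a = n}, w a := by
  rw [weightedGF, coeff_mk]
  refine Eq.trans ?_ (tsum_subtype {a | size a = n} w).symm
  simp only [Set.indicator_apply, Set.mem_ofPred_eq]

theorem weightedGF_comp_equiv (e : α ≃ β) (size : β → ℕ) (w : β → ℝ≥0∞) :
    weightedGF (size ∘ e) (w ∘ e) = weightedGF size w := by
  ext n
  simp only [weightedGF, coeff_mk, Function.comp_apply]
  exact e.tsum_eq fun b => if size b = n then w b else 0

theorem weightedGF_prod (sa : α → ℕ) (wa : α → ℝ≥0∞) (sb : β → ℕ) (wb : β → ℝ≥0∞) :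
    weightedGF (fun p : α × β => sa p.1 + sb p.2) (fun p => wa p.1 * wb p.2)
      = weightedGF sa wa * weightedGF sb wb := by
  ext n
  simp only [weightedGF, coeff_mul, coeff_mk]
  simp_rw [← ENNReal.tsum_mul_right]
  simp_rw [← ENNReal.tsum_mul_left]
  rw [ENNReal.tsum_prod', ← Summable.tsum_finsetSum fun _ _ => ENNReal.summable]
  refine tsum_congr fun a => ?_
  rw [← Summable.tsum_finsetSum fun _ _ => ENNReal.summable]
  refine tsum_congr fun b => ?_
  have hsplit (p : ℕ × ℕ) : ((if sa a = p.1 then wa a else 0) * if sb b = p.2 then wb b else 0)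
      = if (sa a, sb b) = p then wa a * wb b else 0 := by
    rcases p with ⟨i, j⟩
    split_ifs <;> simp_all
  simp only [hsplit, sum_ite_eq, HasAntidiagonal.mem_antidiagonal]

theorem weightedGF_pi (size : α → ℕ) (w : α → ℝ≥0∞) (k : ℕ) :
    weightedGF (fun v : Fin k → α => ∑ i, size (v i)) (fun v => ∏ i, w (v i))
      = weightedGF size w ^ k := by
  induction k with
  | zero =>
    ext n
    simp [weightedGF, coeff_one, eq_comm]
  | succ k ih =>
    rw [pow_succ', ← ih, ← weightedGF_prod, ← weightedGF_comp_equiv (Fin.consEquiv fun _ => α)]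
    congr 1 <;> funext p <;> simp [Fin.sum_univ_succ, Fin.prod_univ_succ]

theorem weightedGF_const_add_const_mul (size : α → ℕ) (w : α → ℝ≥0∞) (c : ℕ) (d : ℝ≥0∞) :
    weightedGF (fun a => c + size a) (fun a => d * w a) = C d * X ^ c * weightedGF size w := by
  ext n
  rw [mul_assoc, coeff_C_mul, coeff_X_pow_mul']
  simp only [weightedGF, coeff_mk]
  split_ifs with hcn
  · rw [← ENNReal.tsum_mul_left]
    refine tsum_congr fun a => ?_
    by_cases h : size a = n - c
    · rw [if_pos (by omega), if_pos h]
    · rw [if_neg (by omega), if_neg h, mul_zero]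
  · rw [mul_zero]
    exact ENNReal.tsum_eq_zero.2 fun a => if_neg (by omega)

theorem coeff_weightedGF_sigma {γ : α → Type*} (size : (Σ a, γ a) → ℕ) (w : (Σ a, γ a) → ℝ≥0∞)
    (n : ℕ) : coeff n (weightedGF size w)
      = ∑' a, coeff n (weightedGF (fun b => size ⟨a, b⟩) fun b => w ⟨a, b⟩) := by
  simp only [weightedGF, coeff_mk]
  exact ENNReal.tsum_sigma' _

end WeightedGF

namespace PlaneTree

theorem edges_node (ts : List PlaneTree) : (node ts).edges = ts.length + (ts.map edges).sum := by
  rw [edges, List.attach_map_val]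

theorem weight_node (ts : List PlaneTree) :
    (node ts).weight = (ts.length ! : ℝ)⁻¹ * (ts.map weight).prod := by
  rw [weight, List.attach_map_val]

theorem weight_nonneg : ∀ T : PlaneTree, 0 ≤ T.weight
  | node ts => by
    rw [weight_node]
    refine mul_nonneg (by positivity) (List.prod_nonneg fun x hx => ?_)
    obtain ⟨T, hT, rfl⟩ := List.mem_map.1 hx
    exact weight_nonneg T

def equivSigmaTuple : (Σ k, Fin k → PlaneTree) ≃ PlaneTree :=
  List.equivSigmaTuple.symm.trans ⟨node, fun | node ts => ts, fun _ => rfl, fun | node _ => rfl⟩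

@[simp] theorem equivSigmaTuple_apply {k : ℕ} (v : Fin k → PlaneTree) :
    equivSigmaTuple ⟨k, v⟩ = node (List.ofFn v) :=
  rfl

noncomputable def gf : ℝ≥0∞⟦X⟧ :=
  weightedGF edges fun T => ENNReal.ofReal T.weight

theorem satisfiesLagrange_gf : SatisfiesLagrange (fun k => (k ! : ℝ≥0∞)⁻¹) gf := by
  have hgf : gf = weightedGF (fun x : Σ k, Fin k → PlaneTree => x.1 + ∑ i, (x.2 i).edges)
      (fun x => (x.1 ! : ℝ≥0∞)⁻¹ * ∏ i, ENNReal.ofReal (x.2 i).weight) := by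
    rw [gf, ← weightedGF_comp_equiv equivSigmaTuple]
    congr 1 <;> funext ⟨k, v⟩ <;> rw [Function.comp_apply, equivSigmaTuple_apply]
    · rw [edges_node, List.length_ofFn, List.map_ofFn, List.sum_ofFn]
      rfl
    · simp only [weight_node, List.length_ofFn, List.map_ofFn, List.prod_ofFn,
        Function.comp_apply]
      rw [ENNReal.ofReal_mul (by positivity), ENNReal.ofReal_inv_of_pos (by positivity),
        ENNReal.ofReal_natCast, ENNReal.ofReal_prod_of_nonneg fun i _ => weight_nonneg (v i)]
  have hpow (k : ℕ) : weightedGF (fun v : Fin k → PlaneTree => ∑ i, (v i).edges)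
      (fun v => ∏ i, ENNReal.ofReal (v i).weight) = gf ^ k :=
    weightedGF_pi edges (fun T => ENNReal.ofReal T.weight) k
  intro n
  conv_lhs => rw [hgf, coeff_weightedGF_sigma]
  simp only [weightedGF_const_add_const_mul, hpow, mul_assoc, coeff_C_mul, coeff_X_pow_mul']
  rw [tsum_eq_sum (s := range (n + 1)), Nat.sum_antidiagonal_eq_sum_range_succ_mk]
  · exact sum_congr rfl fun k hk => by rw [if_pos (by simpa [Nat.lt_succ_iff] using hk)]
  · exact fun k hk => by rw [if_neg (by simpa [Nat.lt_succ_iff] using hk), mul_zero]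

theorem gf_eq_map_cayleySeries : gf = map ENNReal.ofNNRealHom cayleySeries :=
  satisfiesLagrange_gf.eq satisfiesLagrange_cayleySeries

end PlaneTree

/-- For every `n ≥ 0`, the sum over rooted plane trees `T` with exactly `n` edges of
`∏_{i ∈ T} 1/ξ_i!` (where `ξ_i` is the number of children of vertex `i`) equals
`(n+1)^{n-1}/n!`. -/
theorem sum_plane_tree_weights (n : ℕ) :
    ∑' T : {T : PlaneTree // T.edges = n}, (T : PlaneTree).weight
      = (n + 1 : ℝ) ^ (n - 1) / (n.factorial : ℝ) := by
  calc ∑' T : {T : PlaneTree // T.edges = n}, (T : PlaneTree).weight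
      = (∑' T : {T : PlaneTree // T.edges = n}, ENNReal.ofReal (T : PlaneTree).weight).toReal := by
        rw [ENNReal.tsum_toReal_eq fun _ => ENNReal.ofReal_ne_top]
        simp only [ENNReal.toReal_ofReal (PlaneTree.weight_nonneg _)]
    _ = (coeff n (map ENNReal.ofNNRealHom cayleySeries)).toReal := by
        rw [← PlaneTree.gf_eq_map_cayleySeries, PlaneTree.gf, coeff_weightedGF]
    _ = (n + 1 : ℝ) ^ (n - 1) / (n.factorial : ℝ) := by
        simp [cayleySeries]
end
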